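/- Let d ≥ 2, λ_1,…,λ_d > 0, and α_1,…,α_d > 0. The diagonal matrix Diag(α_1,…,α_d) satisfies Condition (C) if and only if for every k ∈ {1,…,d}: 2/α_k + Σ_{i≠k} 1/α_i > sqrt( (Σ_{i≠k} λ_i/α_i)(Σ_{i≠k} 1/(λ_i α_i)) ). -/

import Mathlib

open Matrix Finset

/-- The matrix `Γ^{(k)}`. -/
noncomputable def GammaK {d : ℕ} (lam : Fin d → ℝ) (Γ : Matrix (Fin d) (Fin d) ℝ)
    (k : Fin d) : Matrix (Fin d) (Fin d) ℝ :=
  Matrix.of fun i j => (lam i + lam j) / 2 * (Γ i j + Γ k k - Γ i k - Γ j k)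

/-- Condition (C). -/
def CondC {d : ℕ} (lam : Fin d → ℝ) (Γ : Matrix (Fin d) (Fin d) ℝ) : Prop :=
  Γ.PosDef ∧ ∀ k : Fin d, ∀ x : Fin d → ℝ, x k = 0 → x ≠ 0 →
    0 < x ⬝ᵥ (GammaK lam Γ k).mulVec x

/-- Weighted Cauchy–Schwarz. -/
lemma wcs {ι : Type*} (s : Finset ι) (a b x : ι → ℝ) (ha : ∀ i ∈ s, 0 < a i) :
    (∑ i ∈ s, b i * x i) ^ 2 ≤ (∑ i ∈ s, b i ^ 2 / a i) * (∑ i ∈ s, a i * x i ^ 2) := by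
  have h := Finset.sum_mul_sq_le_sq_mul_sq s (fun i => b i / Real.sqrt (a i))
    (fun i => Real.sqrt (a i) * x i)
  have e1 : ∑ i ∈ s, (b i / Real.sqrt (a i)) * (Real.sqrt (a i) * x i) = ∑ i ∈ s, b i * x i := by
    refine Finset.sum_congr rfl fun i hi => ?_
    have hs : Real.sqrt (a i) ≠ 0 := (Real.sqrt_pos.mpr (ha i hi)).ne'
    field_simp
  have e2 : ∑ i ∈ s, (b i / Real.sqrt (a i)) ^ 2 = ∑ i ∈ s, b i ^ 2 / a i := by
    refine Finset.sum_congr rfl fun i hi => ?_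
    rw [div_pow, Real.sq_sqrt (ha i hi).le]
  have e3 : ∑ i ∈ s, (Real.sqrt (a i) * x i) ^ 2 = ∑ i ∈ s, a i * x i ^ 2 := by
    refine Finset.sum_congr rfl fun i hi => ?_
    rw [mul_pow, Real.sq_sqrt (ha i hi).le]
  rwa [e1, e2, e3] at h

/-- The quadratic form of `Γ^{(k)}` for a diagonal matrix. -/
lemma quadform {d : ℕ} (lam α : Fin d → ℝ) (k : Fin d) (x : Fin d → ℝ) (hxk : x k = 0) :
    x ⬝ᵥ (GammaK lam (Matrix.diagonal α) k).mulVec x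
      = (∑ i, lam i * α i * x i ^ 2)
        + α k * ((∑ i, lam i * x i) * (∑ i, x i)) := by
  have key : ∀ i j : Fin d,
      x i * (GammaK lam (Matrix.diagonal α) k i j * x j)
        = (if i = j then lam i * α i * x i ^ 2 else 0)
          + ((lam i * x i) * x j * (α k / 2) + x i * (lam j * x j) * (α k / 2)) := by
    intro i j
    rcases eq_or_ne i k with hik | hik
    · subst hik; simp [hxk]
    rcases eq_or_ne j k with hjk | hjk
    · subst hjk; simp [hxk, hik]
    rcases eq_or_ne i j with hij | hij
    · subst hij
      simp [GammaK, Matrix.diagonal_apply_ne _ hik]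
      ring
    · simp [GammaK, Matrix.diagonal_apply_ne _ hij,
        Matrix.diagonal_apply_ne _ hik, Matrix.diagonal_apply_ne _ hjk, hij]
      ring
  have hPP : ∑ i : Fin d, ∑ j : Fin d, x i * (lam j * x j) * (α k / 2)
      = ∑ i : Fin d, ∑ j : Fin d, (lam i * x i) * x j * (α k / 2) := by
    rw [Finset.sum_comm]
    refine Finset.sum_congr rfl fun i _ => Finset.sum_congr rfl fun j _ => by ring
  calc x ⬝ᵥ (GammaK lam (Matrix.diagonal α) k).mulVec x
      = ∑ i, ∑ j, x i * (GammaK lam (Matrix.diagonal α) k i j * x j) := by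
        simp [dotProduct, mulVec, Finset.mul_sum]
    _ = ∑ i, ∑ j, ((if i = j then lam i * α i * x i ^ 2 else 0)
          + ((lam i * x i) * x j * (α k / 2) + x i * (lam j * x j) * (α k / 2))) := by
        simp_rw [key]
    _ = (∑ i, lam i * α i * x i ^ 2)
        + α k * ((∑ i, lam i * x i) * (∑ i, x i)) := by
        simp_rw [Finset.sum_add_distrib]
        rw [hPP]
        simp only [Finset.sum_ite_eq, Finset.mem_univ, if_true]
        have : (∑ i : Fin d, ∑ j : Fin d, (lam i * x i) * x j * (α k / 2))
            = ((∑ i, lam i * x i) * (∑ i, x i)) * (α k / 2) := by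
          rw [Finset.sum_mul_sum]
          simp_rw [Finset.sum_mul]
        rw [this]; ring

lemma erase_nonempty {d : ℕ} (hd : 2 ≤ d) (k : Fin d) :
    (Finset.univ.erase k).Nonempty := by
  apply Finset.card_pos.mp
  rw [Finset.card_erase_of_mem (Finset.mem_univ k), Finset.card_univ, Fintype.card_fin]
  omega

set_option maxHeartbeats 1000000 in
theorem stmt6 {d : ℕ} (hd : 2 ≤ d) (lam α : Fin d → ℝ)
    (hlam : ∀ i, 0 < lam i) (hα : ∀ i, 0 < α i) :
    CondC lam (Matrix.diagonal α) ↔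
      ∀ k : Fin d,
        Real.sqrt ((∑ i ∈ Finset.univ.erase k, lam i / α i) *
            (∑ i ∈ Finset.univ.erase k, 1 / (lam i * α i))) <
          2 / α k + ∑ i ∈ Finset.univ.erase k, 1 / α i := by
  -- common notation and facts, per k
  have main : ∀ k : Fin d, True := fun _ => trivial
  constructor
  · rintro ⟨-, hC⟩ k
    set s := Finset.univ.erase k with hs
    set A := ∑ i ∈ s, lam i / α i with hA
    set B := ∑ i ∈ s, 1 / (lam i * α i) with hB
    set S := ∑ i ∈ s, 1 / α i with hSdef
    have hApos : 0 < A := Finset.sum_pos (fun i _ => div_pos (hlam i) (hα i)) (erase_nonempty hd k)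
    have hBpos : 0 < B := Finset.sum_pos
      (fun i _ => div_pos one_pos (mul_pos (hlam i) (hα i))) (erase_nonempty hd k)
    have hSpos : 0 < S := Finset.sum_pos (fun i _ => div_pos one_pos (hα i)) (erase_nonempty hd k)
    have hck : 0 < α k := hα k
    have hABpos : 0 < A * B := mul_pos hApos hBpos
    have hR : 0 < Real.sqrt (A * B) := Real.sqrt_pos.mpr hABpos
    -- S ≤ √(A B)
    have hS2 : S ^ 2 ≤ A * B := by
      have h := wcs s (fun i => lam i * α i) (fun i => lam i)
        (fun i => 1 / (lam i * α i)) (fun i _ => mul_pos (hlam i) (hα i))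
      have e1 : ∑ i ∈ s, lam i * (1 / (lam i * α i)) = S := by
        refine Finset.sum_congr rfl fun i _ => ?_
        have h1 := (hlam i).ne'
        have h2 := (hα i).ne'
        field_simp
      have e2 : ∑ i ∈ s, (lam i) ^ 2 / (lam i * α i) = A := by
        refine Finset.sum_congr rfl fun i _ => ?_
        have h1 := (hlam i).ne'
        have h2 := (hα i).ne'
        field_simp
      have e3 : ∑ i ∈ s, (lam i * α i) * (1 / (lam i * α i)) ^ 2 = B := by
        refine Finset.sum_congr rfl fun i _ => ?_
        have h1 := (hlam i).ne'
        have h2 := (hα i).ne'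
        field_simp
      rw [e1, e2, e3] at h
      exact h
    have hSle : S ≤ Real.sqrt (A * B) := (Real.le_sqrt hSpos.le hABpos.le).mpr hS2
    set t := Real.sqrt (Real.sqrt (A * B) / A) with htdef
    have ht : 0 < t := Real.sqrt_pos.mpr (div_pos hR hApos)
    have ht2 : t ^ 2 = Real.sqrt (A * B) / A := Real.sq_sqrt (div_pos hR hApos).le
    have htA : t ^ 2 * A = Real.sqrt (A * B) := by
      rw [ht2]; field_simp
    have htB : (1 / t ^ 2) * B = Real.sqrt (A * B) := by
      have h3 : Real.sqrt (A * B) * Real.sqrt (A * B) = A * B := Real.mul_self_sqrt hABpos.le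
      rw [ht2, one_div_div, div_mul_eq_mul_div, div_eq_iff hR.ne']
      linarith
    set D := Real.sqrt (A * B) - S with hD
    have hD0 : 0 ≤ D := by rw [hD]; linarith
    -- the witness vector
    set x : Fin d → ℝ := fun i => if i = k then 0 else t / α i - 1 / (t * lam i * α i)
      with hxdef
    have hxk : x k = 0 := by simp [hxdef]
    have hxval : ∀ i ∈ s, x i = t / α i - 1 / (t * lam i * α i) := by
      intro i hi
      rw [hxdef]; simp [Finset.ne_of_mem_erase hi]
    -- the three sums
    have hP : ∑ i ∈ s, lam i * α i * x i ^ 2 = 2 * D := by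
      have hterm : ∀ i ∈ s, lam i * α i * x i ^ 2
          = t ^ 2 * (lam i / α i) - 2 * (1 / α i) + (1 / t ^ 2) * (1 / (lam i * α i)) := by
        intro i hi
        rw [hxval i hi]
        have h1 := (hlam i).ne'
        have h2 := (hα i).ne'
        have h3 := ht.ne'
        field_simp
        ring
      rw [Finset.sum_congr rfl hterm]
      rw [Finset.sum_add_distrib, Finset.sum_sub_distrib, ← Finset.mul_sum, ← Finset.mul_sum,
        ← Finset.mul_sum, ← hA, ← hSdef, ← hB, htA, htB]
      simp [hD]; ring
    have hL : ∑ i ∈ s, lam i * x i = t * A - (1 / t) * S := by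
      have hterm : ∀ i ∈ s, lam i * x i
          = t * (lam i / α i) - (1 / t) * (1 / α i) := by
        intro i hi
        rw [hxval i hi]
        have h1 := (hlam i).ne'
        have h2 := (hα i).ne'
        have h3 := ht.ne'
        field_simp
      rw [Finset.sum_congr rfl hterm, Finset.sum_sub_distrib, ← Finset.mul_sum,
        ← Finset.mul_sum, ← hA, ← hSdef]
    have hM : ∑ i ∈ s, x i = t * S - (1 / t) * B := by
      have hterm : ∀ i ∈ s, x i
          = t * (1 / α i) - (1 / t) * (1 / (lam i * α i)) := by
        intro i hi
        rw [hxval i hi]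
        have h1 := (hlam i).ne'
        have h2 := (hα i).ne'
        have h3 := ht.ne'
        field_simp
      rw [Finset.sum_congr rfl hterm, Finset.sum_sub_distrib, ← Finset.mul_sum,
        ← Finset.mul_sum, ← hSdef, ← hB]
    have hLM : (∑ i ∈ s, lam i * x i) * (∑ i ∈ s, x i) = -(D ^ 2) := by
      have h3 : Real.sqrt (A * B) * Real.sqrt (A * B) = A * B := Real.mul_self_sqrt hABpos.le
      have h4 : t * (1 / t) = 1 := by field_simp
      calc (∑ i ∈ s, lam i * x i) * (∑ i ∈ s, x i)
          = (t * A - (1 / t) * S) * (t * S - (1 / t) * B) := by rw [hL, hM]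
        _ = (t ^ 2 * A) * S - (t * (1 / t)) * (A * B) - (t * (1 / t)) * S ^ 2
            + ((1 / t ^ 2) * B) * S := by ring
        _ = Real.sqrt (A * B) * S - A * B - S ^ 2 + Real.sqrt (A * B) * S := by
            rw [htA, htB, h4]; ring
        _ = -(D ^ 2) := by rw [hD]; linear_combination h3
    rcases eq_or_lt_of_le hD0 with hDz | hDpos
    · -- D = 0, so √(AB) = S < S + 2/αk
      have : Real.sqrt (A * B) = S := by rw [hD] at hDz; linarith
      rw [this]
      have : 0 < 2 / α k := by positivity
      linarith
    · -- D > 0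
      have hx0 : x ≠ 0 := by
        intro hx
        rw [hx] at hP
        simp at hP
        linarith
      have hQ := hC k x hxk hx0
      rw [quadform lam α k x hxk] at hQ
      -- convert sums over univ to sums over s
      have c1 : ∑ i, lam i * α i * x i ^ 2 = ∑ i ∈ s, lam i * α i * x i ^ 2 :=
        (Finset.sum_erase _ (by rw [hxk]; ring)).symm
      have c2 : ∑ i, lam i * x i = ∑ i ∈ s, lam i * x i :=
        (Finset.sum_erase _ (by rw [hxk]; ring)).symm
      have c3 : ∑ i, x i = ∑ i ∈ s, x i := (Finset.sum_erase _ hxk).symm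
      rw [c1, c2, c3, hP, hLM] at hQ
      -- 0 < 2 D - αk D², D > 0 ⟹ D < 2/αk
      have h5 : D < 2 / α k := by
        rw [lt_div_iff₀ hck]
        nlinarith
      have : Real.sqrt (A * B) = D + S := by rw [hD]; ring
      rw [this]
      linarith
  · intro h
    refine ⟨Matrix.posDef_diagonal_iff.mpr hα, ?_⟩
    intro k x hxk hx0
    set s := Finset.univ.erase k with hs
    set A := ∑ i ∈ s, lam i / α i with hA
    set B := ∑ i ∈ s, 1 / (lam i * α i) with hB
    set S := ∑ i ∈ s, 1 / α i with hSdef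
    have hApos : 0 < A := Finset.sum_pos (fun i _ => div_pos (hlam i) (hα i)) (erase_nonempty hd k)
    have hBpos : 0 < B := Finset.sum_pos
      (fun i _ => div_pos one_pos (mul_pos (hlam i) (hα i))) (erase_nonempty hd k)
    have hck : 0 < α k := hα k
    have hABpos : 0 < A * B := mul_pos hApos hBpos
    have hR : 0 < Real.sqrt (A * B) := Real.sqrt_pos.mpr hABpos
    set t := Real.sqrt (Real.sqrt (A * B) / A) with htdef
    have ht : 0 < t := Real.sqrt_pos.mpr (div_pos hR hApos)
    have ht2 : t ^ 2 = Real.sqrt (A * B) / A := Real.sq_sqrt (div_pos hR hApos).le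
    have htA : t ^ 2 * A = Real.sqrt (A * B) := by
      rw [ht2]; field_simp
    have htB : (1 / t ^ 2) * B = Real.sqrt (A * B) := by
      have h3 : Real.sqrt (A * B) * Real.sqrt (A * B) = A * B := Real.mul_self_sqrt hABpos.le
      rw [ht2, one_div_div, div_mul_eq_mul_div, div_eq_iff hR.ne']
      linarith
    -- the quadratic form
    rw [quadform lam α k x hxk]
    have c1 : ∑ i, lam i * α i * x i ^ 2 = ∑ i ∈ s, lam i * α i * x i ^ 2 :=
      (Finset.sum_erase _ (by rw [hxk]; ring)).symm
    have c2 : ∑ i, lam i * x i = ∑ i ∈ s, lam i * x i :=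
      (Finset.sum_erase _ (by rw [hxk]; ring)).symm
    have c3 : ∑ i, x i = ∑ i ∈ s, x i := (Finset.sum_erase _ hxk).symm
    rw [c1, c2, c3]
    set P := ∑ i ∈ s, lam i * α i * x i ^ 2 with hPdef
    set L := ∑ i ∈ s, lam i * x i with hLdef
    set M := ∑ i ∈ s, x i with hMdef
    -- P > 0
    have hPpos : 0 < P := by
      obtain ⟨i, hi⟩ := Function.ne_iff.mp hx0
      simp only [Pi.zero_apply] at hi
      have hik : i ≠ k := by intro hh; rw [hh, hxk] at hi; exact hi rfl
      refine Finset.sum_pos' (fun j _ => mul_nonneg (mul_nonneg (hlam j).le (hα j).le)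
        (sq_nonneg _)) ⟨i, Finset.mem_erase.mpr ⟨hik, Finset.mem_univ i⟩, ?_⟩
      exact mul_pos (mul_pos (hlam i) (hα i)) (pow_two_pos_of_ne_zero hi)
    -- Cauchy–Schwarz bound on t L - M / t
    have hcs : (t * L - (1 / t) * M) ^ 2
        ≤ (2 * Real.sqrt (A * B) - 2 * S) * P := by
      have h := wcs s (fun i => lam i * α i) (fun i => t * lam i - 1 / t) x
        (fun i _ => mul_pos (hlam i) (hα i))
      have e1 : ∑ i ∈ s, (t * lam i - 1 / t) * x i = t * L - (1 / t) * M := by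
        have : ∀ i ∈ s, (t * lam i - 1 / t) * x i
            = t * (lam i * x i) - (1 / t) * x i := by
          intro i _; ring
        rw [Finset.sum_congr rfl this, Finset.sum_sub_distrib, ← Finset.mul_sum,
          ← Finset.mul_sum]
      have e2 : ∑ i ∈ s, (t * lam i - 1 / t) ^ 2 / (lam i * α i)
          = 2 * Real.sqrt (A * B) - 2 * S := by
        have hterm : ∀ i ∈ s, (t * lam i - 1 / t) ^ 2 / (lam i * α i)
            = t ^ 2 * (lam i / α i) - 2 * (1 / α i) + (1 / t ^ 2) * (1 / (lam i * α i)) := by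
          intro i _
          have h1 := (hlam i).ne'
          have h2 := (hα i).ne'
          have h3 := ht.ne'
          field_simp
          ring
        rw [Finset.sum_congr rfl hterm]
        rw [Finset.sum_add_distrib, Finset.sum_sub_distrib, ← Finset.mul_sum, ← Finset.mul_sum,
          ← Finset.mul_sum, ← hA, ← hSdef, ← hB, htA, htB]
        ring
      rw [e1, e2] at h
      exact h
    -- 4 L M ≥ -(t L - M/t)^2
    have hfour : -(t * L - (1 / t) * M) ^ 2 ≤ 4 * (L * M) := by
      have key : 4 * (L * M) = (t * L + (1 / t) * M) ^ 2 - (t * L - (1 / t) * M) ^ 2 := by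
        have h3 := ht.ne'
        field_simp
        ring
      nlinarith [sq_nonneg (t * L + (1 / t) * M)]
    have hLM : -(2 * Real.sqrt (A * B) - 2 * S) * P / 4 ≤ L * M := by
      nlinarith
    -- conclude
    have hineq := h k
    rw [← hA, ← hB, ← hSdef] at hineq
    have h2 : α k * (Real.sqrt (A * B) - S) < 2 := by
      have h3 : (Real.sqrt (A * B) - S) * α k < 2 := (lt_div_iff₀ hck).mp (by linarith)
      linarith [h3, mul_comm (α k) (Real.sqrt (A * B) - S)]
    nlinarith [mul_le_mul_of_nonneg_left hLM hck.le,
      mul_pos hPpos (show (0:ℝ) < 2 - α k * (Real.sqrt (A * B) - S) by linarith)]
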